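/- arXiv:1608.00511 — 4 statements merged into one kernel-verified Lean document; each statement's English description precedes it below -/
import Mathlib

section
/- Let h > 0 be a real number, k ≥ 1 an integer, φ : ℝ → ℝ any function and x ∈ ℝ. With θ_k^l := ∫_{l/k}^{(l+1)/k} (1−θ) dθ = (2k−2l−1)/(2k²) and δ_{−h}δ_hφ(y) := (φ(y+h) − 2φ(y) + φ(y−h))/h², one has the identity Σ_{l=0}^{k−1} θ_k^l · δ_{−h}δ_hφ(x − l h) = (1/(2k²h²)) · ( φ(x−kh) + φ(x−(k−1)h) + (2k−1)·φ(x+h) − (2k+1)·φ(x) ). -/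
/-!
Since `θ_k^l = (2k - 2l - 1) / (2k²)`, the left side is `1 / (2k²h²)` times a sum of second
differences of `b l := φ (x - (l - 1) h)` against weights that drop by `2` at each step. Summing
by parts, only the boundary values `b 0, b 1, b k, b (k + 1)` survive.
-/

open Finset

theorem integral_one_sub (a b : ℝ) : ∫ θ in a..b, (1 - θ) = (b - a) - (b ^ 2 - a ^ 2) / 2 := by
  rw [intervalIntegral.integral_sub intervalIntegrable_const intervalIntegral.intervalIntegrable_id,
    intervalIntegral.integral_const, integral_id, smul_eq_mul, mul_one]

theorem integral_one_sub_div {k : ℝ} (hk : k ≠ 0) (l : ℝ) :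
    ∫ θ in l / k..(l + 1) / k, (1 - θ) = (2 * k - 2 * l - 1) / (2 * k ^ 2) := by
  rw [integral_one_sub]
  field_simp
  ring

section SummationByParts

variable {R : Type*} [CommRing R] (b : ℕ → R)

theorem sum_range_second_difference (k : ℕ) :
    ∑ l ∈ range k, (b l - 2 * b (l + 1) + b (l + 2)) = (b (k + 1) - b k) - (b 1 - b 0) := by
  rw [← sum_range_sub (fun l => b (l + 1) - b l)]
  exact sum_congr rfl fun l _ => by ring

theorem sum_range_weighted_second_difference (k : ℕ) :
    ∑ l ∈ range k, (2 * (k : R) - 2 * l - 1) * (b l - 2 * b (l + 1) + b (l + 2)) =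
      b (k + 1) + b k + (2 * (k : R) - 1) * b 0 - (2 * (k : R) + 1) * b 1 := by
  induction k with
  | zero => simp only [range_zero, sum_empty, Nat.cast_zero]; ring
  | succ k ih =>
    have shift_weight : ∀ l ∈ range k,
        (2 * ((k + 1 : ℕ) : R) - 2 * l - 1) * (b l - 2 * b (l + 1) + b (l + 2)) =
          (2 * (k : R) - 2 * l - 1) * (b l - 2 * b (l + 1) + b (l + 2)) +
            2 * (b l - 2 * b (l + 1) + b (l + 2)) := fun l _ => by push_cast; ring
    rw [sum_range_succ, sum_congr rfl shift_weight, sum_add_distrib, ih, ← mul_sum,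
      sum_range_second_difference]
    push_cast
    ring

end SummationByParts

theorem weighted_second_difference_sum_left_general
    (h : ℝ) (k : ℕ) (φ : ℝ → ℝ) (x : ℝ) :
    ∑ l ∈ Finset.range k,
      (∫ θ in ((l : ℝ) / (k : ℝ))..(((l : ℝ) + 1) / (k : ℝ)), (1 - θ)) *
        ((φ (x - (l : ℝ) * h + h) - 2 * φ (x - (l : ℝ) * h) + φ (x - (l : ℝ) * h - h)) / h ^ 2)
      = (1 / (2 * (k : ℝ) ^ 2 * h ^ 2)) *
        (φ (x - (k : ℝ) * h) + φ (x - ((k : ℝ) - 1) * h)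
          + (2 * (k : ℝ) - 1) * φ (x + h) - (2 * (k : ℝ) + 1) * φ x) := by
  set b : ℕ → ℝ := fun l => φ (x - ((l : ℝ) - 1) * h)
  have term_eq : ∀ l ∈ range k,
      (∫ θ in ((l : ℝ) / (k : ℝ))..(((l : ℝ) + 1) / (k : ℝ)), (1 - θ)) *
        ((φ (x - (l : ℝ) * h + h) - 2 * φ (x - (l : ℝ) * h) + φ (x - (l : ℝ) * h - h)) / h ^ 2)
      = 1 / (2 * (k : ℝ) ^ 2 * h ^ 2) *
          ((2 * (k : ℝ) - 2 * l - 1) * (b l - 2 * b (l + 1) + b (l + 2))) := by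
    intro l hl
    have hk : (k : ℝ) ≠ 0 := Nat.cast_ne_zero.mpr (ne_zero_of_lt (mem_range.mp hl))
    simp only [b, integral_one_sub_div hk, Nat.cast_add, Nat.cast_one, Nat.cast_ofNat]
    rw [show x - ((l : ℝ) - 1) * h = x - l * h + h by ring,
      show x - ((l : ℝ) + 1 - 1) * h = x - l * h by ring,
      show x - ((l : ℝ) + 2 - 1) * h = x - l * h - h by ring]
    ring
  rw [sum_congr rfl term_eq, ← mul_sum, sum_range_weighted_second_difference]
  simp only [b, Nat.cast_add, Nat.cast_one, Nat.cast_zero]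
  ring_nf

/-- Summation identity for the weighted second differences, case `s_k = −1`:
`Σ_{l=0}^{k−1} θ_k^l · δ_{−h}δ_hφ(x − l h) = (1/(2k²h²)) (φ(x−kh) + φ(x−(k−1)h) + (2k−1)φ(x+h) − (2k+1)φ(x))`,
where `θ_k^l = ∫_{l/k}^{(l+1)/k} (1−θ) dθ`. -/
theorem weighted_second_difference_sum_left
    (h : ℝ) (hh : 0 < h) (k : ℕ) (hk : 1 ≤ k) (φ : ℝ → ℝ) (x : ℝ) :
    ∑ l ∈ Finset.range k,
      (∫ θ in ((l : ℝ) / (k : ℝ))..(((l : ℝ) + 1) / (k : ℝ)), (1 - θ)) *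
        ((φ (x - (l : ℝ) * h + h) - 2 * φ (x - (l : ℝ) * h) + φ (x - (l : ℝ) * h - h)) / h ^ 2)
      = (1 / (2 * (k : ℝ) ^ 2 * h ^ 2)) *
        (φ (x - (k : ℝ) * h) + φ (x - ((k : ℝ) - 1) * h)
          + (2 * (k : ℝ) - 1) * φ (x + h) - (2 * (k : ℝ) + 1) * φ x) :=
  weighted_second_difference_sum_left_general h k φ x
end

section
/- Let ν be a Lévy measure, n a positive integer and h = 1/n. Then for every square integrable φ : ℝ → ℝ, each summand of the series Σ_{k∈𝔹_h} ν(B_k^h) · ( ∫_ℝ φ(x+hk)φ(x) dx − ∫_ℝ φ(x)² dx ) is nonpositive; in particular the series converges and its sum is ≤ 0. (This expresses the negative semi-definiteness ⟨J_2^hφ, φ⟩_{L²} ≤ 0 of the tail operator J_2^h.) -/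
open MeasureTheory

/-- The grid cell `B_k^h`: for `k ≥ 1` it is `((k−1)h, kh]`, for `k ≤ −1` it is `[kh, (k+1)h)`. -/
noncomputable def levyCell (h : ℝ) (k : ℤ) : Set ℝ :=
  if 0 < k then Set.Ioc (((k : ℝ) - 1) * h) ((k : ℝ) * h)
  else Set.Ico ((k : ℝ) * h) (((k : ℝ) + 1) * h)

/-!
Translation invariance of Lebesgue measure and `2ab ≤ a² + b²` give
`|∫ φ(x + a) φ(x) dx| ≤ ∫ φ²`, so every summand is `ν(B_k^h)` times a number in `[-2‖φ‖², 0]`.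
For `|k| > n` the cells `B_k^h` are pairwise disjoint and lie in `{|z| > 1}`, which has finite
`ν`-measure because `min 1 z² = 1` there; hence `Σ ν(B_k^h) < ∞` and the series converges
absolutely.
-/

open Function

section Correlation

variable {α : Type*} [MeasurableSpace α] {μ : Measure α}

theorem integral_mul_le_half_integral_sq_add {f g : α → ℝ} (hf : MemLp f 2 μ) (hg : MemLp g 2 μ) :
    ∫ x, f x * g x ∂μ ≤ (∫ x, f x ^ 2 ∂μ + ∫ x, g x ^ 2 ∂μ) / 2 := by
  rw [← integral_add hf.integrable_sq hg.integrable_sq, ← integral_div]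
  exact integral_mono (hf.integrable_mul hg) ((hf.integrable_sq.add hg.integrable_sq).div_const 2)
    fun x => by nlinarith [two_mul_le_add_sq (f x) (g x)]

theorem abs_integral_mul_le_half_integral_sq_add {f g : α → ℝ} (hf : MemLp f 2 μ)
    (hg : MemLp g 2 μ) :
    |∫ x, f x * g x ∂μ| ≤ (∫ x, f x ^ 2 ∂μ + ∫ x, g x ^ 2 ∂μ) / 2 := by
  refine abs_le'.mpr ⟨integral_mul_le_half_integral_sq_add hf hg, ?_⟩
  simpa [integral_neg] using integral_mul_le_half_integral_sq_add hf.neg hg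

theorem abs_integral_add_right_mul_le_integral_sq {G : Type*} [MeasurableSpace G] [AddGroup G]
    [MeasurableAdd G] {μ : Measure G} [μ.IsAddRightInvariant] {φ : G → ℝ} (hφ : MemLp φ 2 μ)
    (a : G) : |∫ x, φ (x + a) * φ x ∂μ| ≤ ∫ x, φ x ^ 2 ∂μ := by
  have hshift : MemLp (fun x => φ (x + a)) 2 μ :=
    hφ.comp_measurePreserving (measurePreserving_add_right μ a)
  have := abs_integral_mul_le_half_integral_sq_add hshift hφ
  rwa [integral_add_right_eq_self (fun x => φ x ^ 2) a, add_self_div_two] at this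

end Correlation

theorem eq_of_mem_levyCell {h : ℝ} (hh : 0 < h) {k : ℤ} (hk : k ≠ 0) {z : ℝ}
    (hz : z ∈ levyCell h k) : k = if 0 < z then ⌈z / h⌉ else ⌊z / h⌋ := by
  unfold levyCell at hz
  split_ifs at hz with hk0
  · have hk1 : (1 : ℝ) ≤ k := by exact_mod_cast hk0
    have hz0 : 0 < z := (mul_nonneg (sub_nonneg.mpr hk1) hh.le).trans_lt hz.1
    rw [if_pos hz0, eq_comm, Int.ceil_eq_iff, lt_div_iff₀ hh, div_le_iff₀ hh]
    exact hz
  · have hk1 : (k : ℝ) + 1 ≤ 0 := by exact_mod_cast (by omega : k + 1 ≤ 0)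
    have hz0 : ¬ 0 < z := not_lt.mpr (hz.2.le.trans (mul_nonpos_of_nonpos_of_nonneg hk1 hh.le))
    rw [if_neg hz0, eq_comm, Int.floor_eq_iff, le_div_iff₀ hh, div_lt_iff₀ hh]
    exact hz

theorem levyCell_disjoint {h : ℝ} (hh : 0 < h) {k l : ℤ} (hk : k ≠ 0) (hl : l ≠ 0)
    (hkl : k ≠ l) : Disjoint (levyCell h k) (levyCell h l) :=
  Set.disjoint_left.mpr fun _ hzk hzl =>
    hkl ((eq_of_mem_levyCell hh hk hzk).trans (eq_of_mem_levyCell hh hl hzl).symm)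

theorem measurableSet_levyCell (h : ℝ) (k : ℤ) : MeasurableSet (levyCell h k) := by
  unfold levyCell
  split_ifs
  exacts [measurableSet_Ioc, measurableSet_Ico]

theorem levyCell_subset_abs_gt (h : ℝ) (k : ℤ) :
    levyCell h k ⊆ {z | (|(k : ℝ)| - 1) * h < |z|} := by
  intro z hz
  unfold levyCell at hz
  split_ifs at hz with hk0
  · rw [Set.mem_ofPred_eq, abs_of_pos (by exact_mod_cast hk0 : (0 : ℝ) < k)]
    exact hz.1.trans_le (le_abs_self z)
  · rw [Set.mem_ofPred_eq, abs_of_nonpos (by exact_mod_cast not_lt.mp hk0 : (k : ℝ) ≤ 0)]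
    linarith [hz.2, neg_le_abs z]

theorem levyCell_subset_one_lt_abs {n : ℕ} (hn : 0 < n) {k : ℤ} (hk : (n : ℤ) < |k|) :
    levyCell (1 / n) k ⊆ {z | 1 < |z|} := by
  refine (levyCell_subset_abs_gt _ k).trans fun z hz => lt_of_le_of_lt ?_ (Set.mem_ofPred.mp hz)
  have hkn : (n : ℝ) ≤ |(k : ℝ)| - 1 := by
    rw [← Int.cast_abs]; linarith [(by exact_mod_cast hk : (n : ℝ) + 1 ≤ ((|k| : ℤ) : ℝ))]
  rwa [mul_one_div, one_le_div (by positivity)]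

theorem measure_one_lt_abs_lt_top {ν : Measure ℝ}
    (hν : ∫⁻ z, ENNReal.ofReal (min 1 (z ^ 2)) ∂ν < ⊤) : ν {z | 1 < |z|} < ⊤ := by
  refine lt_of_le_of_lt ?_ hν
  calc ν {z | 1 < |z|} ≤ ν {z | 1 ≤ ENNReal.ofReal (min 1 (z ^ 2))} := by
        refine measure_mono fun z hz => ?_
        simpa using hz.out.le
    _ = 1 * ν {z | 1 ≤ ENNReal.ofReal (min 1 (z ^ 2))} := (one_mul _).symm
    _ ≤ _ := mul_meas_ge_le_lintegral₀ (by fun_prop) 1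

theorem summable_measure_toReal_of_disjoint {α ι : Type*} [MeasurableSpace α] {μ : Measure α}
    {s : ι → Set α} (hs : ∀ i, MeasurableSet (s i)) (hd : Pairwise (Disjoint on s)) {t : Set α}
    (hst : ∀ i, s i ⊆ t) (ht : μ t ≠ ⊤) : Summable fun i => (μ (s i)).toReal :=
  ENNReal.summable_toReal <| ne_top_of_le_ne_top ht <|
    (tsum_meas_le_meas_iUnion_of_disjoint μ hs hd).trans (measure_mono (Set.iUnion_subset hst))

theorem tail_operator_negative_semidefinite_general
    (ν : Measure ℝ)
    (hνint : ∫⁻ z, ENNReal.ofReal (min 1 (z ^ 2)) ∂ν < ⊤)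
    (n : ℕ) (hn : 0 < n) (φ : ℝ → ℝ) (hφ : MemLp φ 2 (volume : Measure ℝ)) :
    (∀ k : ℤ, (n : ℤ) < |k| →
      (ν (levyCell (1 / n) k)).toReal *
        ((∫ x, φ (x + (1 / n : ℝ) * (k : ℝ)) * φ x) - ∫ x, φ x ^ 2) ≤ 0) ∧
    Summable (fun k : ℤ => if (n : ℤ) < |k| then
      (ν (levyCell (1 / n) k)).toReal *
        ((∫ x, φ (x + (1 / n : ℝ) * (k : ℝ)) * φ x) - ∫ x, φ x ^ 2) else 0) ∧
    (∑' k : ℤ, if (n : ℤ) < |k| then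
      (ν (levyCell (1 / n) k)).toReal *
        ((∫ x, φ (x + (1 / n : ℝ) * (k : ℝ)) * φ x) - ∫ x, φ x ^ 2) else 0) ≤ 0 := by
  set M := ∫ x, φ x ^ 2
  have hcorr (k : ℤ) : |∫ x, φ (x + (1 / n : ℝ) * k) * φ x| ≤ M :=
    abs_integral_add_right_mul_le_integral_sq hφ _
  have hterm (k : ℤ) (_ : (n : ℤ) < |k|) :
      (ν (levyCell (1 / n) k)).toReal * ((∫ x, φ (x + (1 / n : ℝ) * k) * φ x) - M) ≤ 0 :=
    mul_nonpos_of_nonneg_of_nonpos ENNReal.toReal_nonneg (by linarith [(abs_le.mp (hcorr k)).2])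
  let tail : Set ℤ := {k | (n : ℤ) < |k|}
  have hne (k : tail) : (k : ℤ) ≠ 0 := fun h => by
    have := k.2.out; rw [h, abs_zero] at this; omega
  have hcells : Summable (tail.indicator fun k => (ν (levyCell (1 / n) k)).toReal) :=
    summable_subtype_iff_indicator.mp <| summable_measure_toReal_of_disjoint
      (fun k => measurableSet_levyCell _ _)
      (fun k l hkl =>
        levyCell_disjoint (by positivity) (hne k) (hne l) (Subtype.val_injective.ne hkl))
      (fun k => levyCell_subset_one_lt_abs hn k.2) (measure_one_lt_abs_lt_top hνint).ne
  refine ⟨hterm, (hcells.mul_left (2 * M)).of_norm_bounded fun k => ?_,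
    tsum_nonpos fun k => ?_⟩ <;> split_ifs with hk
  · rw [Set.indicator_of_mem (s := tail) hk, Real.norm_eq_abs, abs_mul,
      abs_of_nonneg ENNReal.toReal_nonneg, mul_comm]
    gcongr
    have := abs_le.mp (hcorr k)
    exact abs_le.mpr ⟨by linarith, by linarith⟩
  · simp [Set.indicator_of_notMem (s := tail) hk]
  · exact hterm k hk
  · exact le_rfl

/-- Negative semi-definiteness of the tail operator `J_2^h`: for a Lévy measure `ν`, `h = 1/n`
and square integrable `φ`, each summand of
`Σ_{|k|>n} ν(B_k^h) (⟨φ(·+hk), φ⟩ − ‖φ‖²)` is nonpositive, the series is summable, and its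
sum is nonpositive. -/
theorem tail_operator_negative_semidefinite
    (ν : Measure ℝ) (hν0 : ν {0} = 0)
    (hνint : ∫⁻ z, ENNReal.ofReal (min 1 (z ^ 2)) ∂ν < ⊤)
    (n : ℕ) (hn : 0 < n) (φ : ℝ → ℝ) (hφ : MemLp φ 2 (volume : Measure ℝ)) :
    (∀ k : ℤ, (n : ℤ) < |k| →
      (ν (levyCell (1 / n) k)).toReal *
        ((∫ x, φ (x + (1 / n : ℝ) * (k : ℝ)) * φ x) - ∫ x, φ x ^ 2) ≤ 0) ∧
    Summable (fun k : ℤ => if (n : ℤ) < |k| then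
      (ν (levyCell (1 / n) k)).toReal *
        ((∫ x, φ (x + (1 / n : ℝ) * (k : ℝ)) * φ x) - ∫ x, φ x ^ 2) else 0) ∧
    (∑' k : ℤ, if (n : ℤ) < |k| then
      (ν (levyCell (1 / n) k)).toReal *
        ((∫ x, φ (x + (1 / n : ℝ) * (k : ℝ)) * φ x) - ∫ x, φ x ^ 2) else 0) ≤ 0 :=
  tail_operator_negative_semidefinite_general ν hνint n hn φ hφ
end

section
/- Let h > 0, let K ≥ 0, and let a : ℝ → ℝ be twice differentiable with |a′(x)| ≤ K and |a″(x)| ≤ K for all x. Then for every square-summable grid function φ : ℤ → ℝ (the value at the grid point jh being φ(j)), | h Σ_{j∈ℤ} (δ^hφ)(j) · (δ^h a)(jh) · (T^hφ)(j) | ≤ (K/2) · h Σ_{j∈ℤ} φ(j)², where (δ^hφ)(j) = (φ(j+1) − φ(j−1))/(2h), (δ^h a)(x) = (a(x+h) − a(x−h))/(2h) and (T^hφ)(j) = (φ(j+1) + φ(j−1))/2. -/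
/-!
Since `δ^h φ · T^h φ = δ^h (φ²) / 2`, the sum equals `(1 / 4h) ∑ (φ(j+1)² - φ(j-1)²) c_j` with
`c_j = δ^h a (jh)`. Summation by parts moves the difference onto `c`, giving
`(1 / 4h) ∑ φ_j² (c_{j-1} - c_{j+1})`, and `c_{j-1} - c_{j+1}` is `-1/(2h)` times the second
difference of `a` with step `2h`, so by the mean value theorem it is at most `2hK` in absolute
value. The bound `|a'| ≤ K` makes `c` bounded, which keeps all the shifted series summable.
-/

section MeanValue

variable {f : ℝ → ℝ} {K : ℝ}

theorem abs_sub_le_of_abs_deriv_le (hf : Differentiable ℝ f) (hK : ∀ x, |deriv f x| ≤ K)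
    (x y : ℝ) : |f x - f y| ≤ K * |x - y| :=
  convex_univ.norm_image_sub_le_of_norm_deriv_le (fun z _ => hf z) (fun z _ => hK z)
    (Set.mem_univ y) (Set.mem_univ x)

-- `s ↦ f (x + s) - f (x + s - t)` moves from `f x - f (x - t)` at `s = 0` to `f (x + t) - f x` at
-- `s = t`, and its derivative is a difference of `f'` at points `t` apart, hence at most `K |t|`.
theorem abs_add_sub_two_mul_add_sub_le (hf : Differentiable ℝ f)
    (hf' : Differentiable ℝ (deriv f)) (hK : ∀ x, |deriv (deriv f) x| ≤ K) (x t : ℝ) :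
    |f (x + t) - 2 * f x + f (x - t)| ≤ K * t ^ 2 := by
  let g : ℝ → ℝ := fun s => f (s + x) - f (s + (x - t))
  have hg : ∀ s, HasDerivAt g (deriv f (s + x) - deriv f (s + (x - t))) s := fun s =>
    ((hf _).hasDerivAt.comp_add_const s x).sub ((hf _).hasDerivAt.comp_add_const s (x - t))
  have hg' : ∀ s, |deriv f (s + x) - deriv f (s + (x - t))| ≤ K * |t| := fun s => by
    simpa using abs_sub_le_of_abs_deriv_le hf' hK (s + x) (s + (x - t))
  have := convex_univ.norm_image_sub_le_of_norm_hasDerivWithin_le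
    (fun s _ => (hg s).hasDerivWithinAt) (fun s _ => hg' s) (Set.mem_univ 0) (Set.mem_univ t)
  calc |f (x + t) - 2 * f x + f (x - t)| = |g t - g 0| := by simp only [g]; ring_nf
    _ ≤ K * |t| * |t - 0| := this
    _ = K * t ^ 2 := by rw [sub_zero, mul_assoc, ← sq, sq_abs]

end MeanValue

/-- The symmetric difference quotient `δ^h f`. -/
noncomputable def centralDiff (h : ℝ) (f : ℝ → ℝ) (x : ℝ) : ℝ :=
  (f (x + h) - f (x - h)) / (2 * h)

section CentralDiff

variable {f : ℝ → ℝ} {K h : ℝ}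

theorem abs_centralDiff_le (hf : Differentiable ℝ f) (hK : ∀ x, |deriv f x| ≤ K) (hh : h ≠ 0)
    (x : ℝ) : |centralDiff h f x| ≤ K := by
  have h2h : 0 < |2 * h| := by positivity
  rw [centralDiff, abs_div, div_le_iff₀ h2h]
  simpa [two_mul, add_sub_sub_cancel] using abs_sub_le_of_abs_deriv_le hf hK (x + h) (x - h)

theorem abs_centralDiff_sub_centralDiff_le (hf : Differentiable ℝ f)
    (hf' : Differentiable ℝ (deriv f)) (hK : ∀ x, |deriv (deriv f) x| ≤ K) (hh : h ≠ 0)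
    (x : ℝ) : |centralDiff h f (x - h) - centralDiff h f (x + h)| ≤ 2 * |h| * K := by
  have h2h : 0 < |2 * h| := by positivity
  have hsecond : centralDiff h f (x - h) - centralDiff h f (x + h) =
      -((f (x + 2 * h) - 2 * f x + f (x - 2 * h)) / (2 * h)) := by
    simp only [centralDiff]; ring_nf
  rw [hsecond, abs_neg, abs_div, div_le_iff₀ h2h]
  calc _ ≤ K * (2 * h) ^ 2 := abs_add_sub_two_mul_add_sub_le hf hf' hK x (2 * h)
    _ = 2 * |h| * K * |2 * h| := by rw [abs_mul, ← sq_abs (2 * h), abs_mul]; ring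

end CentralDiff

section Summation

variable {ψ d : ℤ → ℝ} {M : ℝ}

theorem summable_mul_of_abs_le (hψ : Summable ψ) (hd : ∀ j, |d j| ≤ M) :
    Summable fun j => ψ j * d j :=
  Summable.of_norm_bounded (g := fun j => |ψ j| * M) (hψ.abs.mul_right M) fun j => by
    rw [Real.norm_eq_abs, abs_mul]; exact mul_le_mul_of_nonneg_left (hd j) (abs_nonneg _)

theorem abs_tsum_mul_le (hψ : Summable ψ) (hψ0 : ∀ j, 0 ≤ ψ j) (hd : ∀ j, |d j| ≤ M) :
    |∑' j, ψ j * d j| ≤ M * ∑' j, ψ j := by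
  have hψd := summable_mul_of_abs_le hψ hd
  calc |∑' j, ψ j * d j| ≤ ∑' j, |ψ j * d j| := by
        simpa only [Real.norm_eq_abs] using
          norm_tsum_le_tsum_norm (f := fun j => ψ j * d j)
            (by simpa only [Real.norm_eq_abs] using hψd.abs)
    _ ≤ ∑' j, ψ j * M := Summable.tsum_le_tsum (fun j => by
        rw [abs_mul, abs_of_nonneg (hψ0 j)]; exact mul_le_mul_of_nonneg_left (hd j) (hψ0 j))
        hψd.abs (hψ.mul_right M)
    _ = M * ∑' j, ψ j := by rw [tsum_mul_right, mul_comm]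

theorem tsum_sub_shift_mul_eq_tsum_mul_sub_shift (hminus : Summable fun j => ψ j * d (j - 1))
    (hplus : Summable fun j => ψ j * d (j + 1)) :
    ∑' j, (ψ (j + 1) - ψ (j - 1)) * d j = ∑' j, ψ j * (d (j - 1) - d (j + 1)) := by
  have hsum₁ : Summable fun j => ψ (j + 1) * d j := by
    simpa [Function.comp_def] using (Equiv.addRight (1 : ℤ)).summable_iff.mpr hminus
  have hsum₂ : Summable fun j => ψ (j - 1) * d j := by
    simpa [Function.comp_def] using (Equiv.subRight (1 : ℤ)).summable_iff.mpr hplus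
  have hshift₁ : ∑' j, ψ (j + 1) * d j = ∑' j, ψ j * d (j - 1) := by
    simpa using (Equiv.addRight (1 : ℤ)).tsum_eq fun j => ψ j * d (j - 1)
  have hshift₂ : ∑' j, ψ (j - 1) * d j = ∑' j, ψ j * d (j + 1) := by
    simpa using (Equiv.subRight (1 : ℤ)).tsum_eq fun j => ψ j * d (j + 1)
  simp_rw [sub_mul, mul_sub]
  rw [hsum₁.tsum_sub hsum₂, hminus.tsum_sub hplus, hshift₁, hshift₂]

end Summation

theorem grid_symmetric_difference_product_bound_general
    (h K : ℝ) (hh : 0 < h) (a : ℝ → ℝ)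
    (ha : Differentiable ℝ a) (ha' : Differentiable ℝ (deriv a))
    (haK1 : ∀ x, |deriv a x| ≤ K) (haK2 : ∀ x, |deriv (deriv a) x| ≤ K)
    (φ : ℤ → ℝ) (hφ : Summable fun j : ℤ => φ j ^ 2) :
    |h * ∑' j : ℤ, ((φ (j + 1) - φ (j - 1)) / (2 * h)) *
        ((a ((j : ℝ) * h + h) - a ((j : ℝ) * h - h)) / (2 * h)) *
        ((φ (j + 1) + φ (j - 1)) / 2)|
      ≤ (K / 2) * (h * ∑' j : ℤ, φ j ^ 2) := by
  set c : ℤ → ℝ := fun j => centralDiff h a (j * h)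
  have hc : ∀ j, |c j| ≤ K := fun j => abs_centralDiff_le ha haK1 hh.ne' _
  have hdc : ∀ j, |c (j - 1) - c (j + 1)| ≤ 2 * h * K := fun j => by
    simpa [c, sub_mul, add_mul, abs_of_pos hh] using
      abs_centralDiff_sub_centralDiff_le ha ha' haK2 hh.ne' (j * h)
  have hsummand : ∀ j : ℤ, ((φ (j + 1) - φ (j - 1)) / (2 * h)) *
      ((a ((j : ℝ) * h + h) - a ((j : ℝ) * h - h)) / (2 * h)) * ((φ (j + 1) + φ (j - 1)) / 2) =
      (φ (j + 1) ^ 2 - φ (j - 1) ^ 2) * c j / (4 * h) := fun j => by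
    simp only [c, centralDiff]; field_simp; ring
  have hparts := tsum_sub_shift_mul_eq_tsum_mul_sub_shift (ψ := fun j => φ j ^ 2)
    (summable_mul_of_abs_le hφ fun j => hc (j - 1)) (summable_mul_of_abs_le hφ fun j => hc (j + 1))
  have hscale : ∀ S, h * (S / (4 * h)) = S / 4 := fun S => by field_simp
  rw [tsum_congr hsummand, tsum_div_const, hparts, hscale, abs_div,
    abs_of_pos (by norm_num : (0 : ℝ) < 4), div_le_iff₀ (by norm_num)]
  calc _ ≤ 2 * h * K * ∑' j, φ j ^ 2 := abs_tsum_mul_le hφ (fun j => sq_nonneg _) hdc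
    _ = K / 2 * (h * ∑' j, φ j ^ 2) * 4 := by ring

/-- Bound on the ℓ²(hℤ) inner product `|(δ^hφ, (δ^h a)T^hφ)_{ℓ²}| ≤ (K/2)‖φ‖²_{ℓ²}` for `a`
twice differentiable with `|a′| ≤ K`, `|a″| ≤ K`, and square-summable grid functions `φ`. -/
theorem grid_symmetric_difference_product_bound
    (h K : ℝ) (hh : 0 < h) (hK : 0 ≤ K) (a : ℝ → ℝ)
    (ha : Differentiable ℝ a) (ha' : Differentiable ℝ (deriv a))
    (haK1 : ∀ x, |deriv a x| ≤ K) (haK2 : ∀ x, |deriv (deriv a) x| ≤ K)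
    (φ : ℤ → ℝ) (hφ : Summable fun j : ℤ => φ j ^ 2) :
    |h * ∑' j : ℤ, ((φ (j + 1) - φ (j - 1)) / (2 * h)) *
        ((a ((j : ℝ) * h + h) - a ((j : ℝ) * h - h)) / (2 * h)) *
        ((φ (j + 1) + φ (j - 1)) / 2)|
      ≤ (K / 2) * (h * ∑' j : ℤ, φ j ^ 2) :=
  grid_symmetric_difference_product_bound_general h K hh a ha ha' haK1 haK2 φ hφ
end

section
/- Let X be a real Hilbert space, C ≥ 0, τ > 0, n a positive integer, and set T = nτ. Let R_1, …, R_n be bounded linear operators on X with ⟨R_i x, x⟩ ≤ C·‖x‖² for all x ∈ X and all i, and let F_1, …, F_n ∈ X. Suppose e_0, e_1, …, e_n ∈ X satisfy e_0 = 0 and e_i = e_{i−1} + τ·R_i e_i + F_i for i = 1, …, n. If (2C+1)·τ ≤ 1/2, then max_{0≤i≤n} ‖e_i‖² ≤ 2·e^{2(2C+1)T} · τ^{−1} · Σ_{i=1}^n ‖F_i‖². -/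
/-!
Testing the scheme against `e_i` and using `‖b‖² - ‖a‖² = 2⟪b, b - a⟫ - ‖b - a‖²` gives the energy
estimate `(1 - (2C+1)τ) ‖e_i‖² ≤ ‖e_{i-1}‖² + τ⁻¹ ‖F_i‖²`, the term `(2C+1)τ ‖e_i‖²` collecting the
one-sided bound on `R_i` and Young's inequality `2⟪e_i, F_i⟫ ≤ τ ‖e_i‖² + τ⁻¹ ‖F_i‖²`. Since
`(2C+1)τ ≤ 1/2`, dividing by `1 - (2C+1)τ` costs at most a factor `1 + 2(2C+1)τ ≤ 2`, and the
discrete Grönwall inequality turns the resulting one-step recurrence into the exponential bound.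
-/

open scoped RealInnerProductSpace

open Finset

section InnerProduct

variable {X : Type*} [NormedAddCommGroup X] [InnerProductSpace ℝ X]

theorem norm_sq_le_norm_sq_add_two_inner_sub (x y : X) : ‖y‖ ^ 2 ≤ ‖x‖ ^ 2 + 2 * ⟪y, y - x⟫ := by
  have h := norm_sub_sq_real y (y - x)
  rw [sub_sub_cancel] at h
  nlinarith [sq_nonneg ‖y - x‖]

theorem two_inner_le_mul_norm_sq_add_inv_mul_norm_sq {τ : ℝ} (hτ : 0 < τ) (x y : X) :
    2 * ⟪x, y⟫ ≤ τ * ‖x‖ ^ 2 + τ⁻¹ * ‖y‖ ^ 2 :=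
  calc 2 * ⟪x, y⟫ ≤ 2 * ‖x‖ * ‖y‖ := by
        rw [mul_assoc]; exact mul_le_mul_of_nonneg_left (real_inner_le_norm x y) zero_le_two
    _ ≤ τ * ‖x‖ ^ 2 + τ⁻¹ * ‖y‖ ^ 2 := two_mul_le_add_mul_sq hτ

theorem implicit_euler_energy_estimate {C τ : ℝ} (hτ : 0 < τ) {x y r f : X}
    (hy : y = x + τ • r + f) (hr : ⟪r, y⟫ ≤ C * ‖y‖ ^ 2) :
    (1 - (2 * C + 1) * τ) * ‖y‖ ^ 2 ≤ ‖x‖ ^ 2 + τ⁻¹ * ‖f‖ ^ 2 := by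
  have hinner : ⟪y, y - x⟫ = τ * ⟪r, y⟫ + ⟪y, f⟫ := by
    have hyx : y - x = τ • r + f := by rw [hy]; abel
    rw [hyx, inner_add_right, real_inner_smul_right, real_inner_comm]
  have energy := norm_sq_le_norm_sq_add_two_inner_sub x y
  have young := two_inner_le_mul_norm_sq_add_inv_mul_norm_sq hτ y f
  nlinarith [mul_le_mul_of_nonneg_left hr hτ.le]

end InnerProduct

theorem le_one_add_two_mul_of_one_sub_mul_le {a x y : ℝ} (ha₀ : 0 ≤ a) (ha : a ≤ 1 / 2)
    (hx : 0 ≤ x) (h : (1 - a) * x ≤ y) : x ≤ (1 + 2 * a) * y :=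
  calc x ≤ (1 + 2 * a) * ((1 - a) * x) := by
        nlinarith [mul_nonneg (mul_nonneg ha₀ hx) (by linarith : (0 : ℝ) ≤ 1 - 2 * a)]
    _ ≤ (1 + 2 * a) * y := by gcongr

theorem discrete_gronwall_of_le_horizon {u b c : ℕ → ℝ} {N : ℕ} (hu_nonneg : ∀ k, 0 ≤ u k)
    (hu : ∀ k < N, u (k + 1) ≤ (1 + c k) * u k + b k) (hc : ∀ k, 0 ≤ c k)
    (hb : ∀ k, 0 ≤ b k) {k : ℕ} (hk : k ≤ N) :
    u k ≤ (u 0 + ∑ j ∈ range k, b j) * Real.exp (∑ j ∈ range k, c j) := by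
  -- freeze the sequence after time `N`, so that the recurrence holds for all times
  have hfrozen : ∀ k ≥ 0, u (min (k + 1) N) ≤ (1 + c k) * u (min k N) + b k := by
    intro k _
    rcases lt_or_ge k N with hkN | hkN
    · rw [min_eq_left hkN.le, min_eq_left hkN]
      exact hu k hkN
    · rw [min_eq_right hkN, min_eq_right (by omega)]
      nlinarith [mul_nonneg (hc k) (hu_nonneg N), hb k]
  simpa only [min_eq_left hk, min_eq_left (Nat.zero_le N), range_eq_Ico] using
    discrete_gronwall (u := fun k ↦ u (min k N)) (hu_nonneg _) hfrozen (fun k _ ↦ hc k)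
      (fun k _ ↦ hb k) (Nat.zero_le k)

theorem discrete_stability_general
    {X : Type*} [NormedAddCommGroup X] [InnerProductSpace ℝ X]
    (C τ : ℝ) (hC : 0 ≤ C) (hτ : 0 < τ) (n : ℕ)
    (R : ℕ → X →L[ℝ] X)
    (hR : ∀ i, 1 ≤ i → i ≤ n → ∀ x : X, ⟪R i x, x⟫ ≤ C * ‖x‖ ^ 2)
    (F : ℕ → X) (e : ℕ → X) (he0 : e 0 = 0)
    (heq : ∀ i, 1 ≤ i → i ≤ n → e i = e (i - 1) + τ • R i (e i) + F i)
    (hsmall : (2 * C + 1) * τ ≤ 1 / 2) :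
    ∀ i ≤ n, ‖e i‖ ^ 2
      ≤ 2 * Real.exp (2 * (2 * C + 1) * (n * τ)) * τ⁻¹ * ∑ i ∈ Finset.Icc 1 n, ‖F i‖ ^ 2 := by
  intro i hi
  set a := (2 * C + 1) * τ with ha
  have ha₀ : 0 ≤ a := by positivity
  have step : ∀ k < n, ‖e (k + 1)‖ ^ 2 ≤ (1 + 2 * a) * ‖e k‖ ^ 2 + 2 * τ⁻¹ * ‖F (k + 1)‖ ^ 2 := by
    intro k hk
    have energy := implicit_euler_energy_estimate hτ (heq (k + 1) (by omega) hk)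
      (hR (k + 1) (by omega) hk _)
    rw [Nat.add_sub_cancel] at energy
    calc ‖e (k + 1)‖ ^ 2 ≤ (1 + 2 * a) * (‖e k‖ ^ 2 + τ⁻¹ * ‖F (k + 1)‖ ^ 2) :=
          le_one_add_two_mul_of_one_sub_mul_le ha₀ hsmall (sq_nonneg _) energy
      _ ≤ (1 + 2 * a) * ‖e k‖ ^ 2 + 2 * τ⁻¹ * ‖F (k + 1)‖ ^ 2 := by
          nlinarith [mul_nonneg (inv_pos.2 hτ).le (sq_nonneg ‖F (k + 1)‖)]
  have hsum : ∑ k ∈ range i, ‖F (k + 1)‖ ^ 2 ≤ ∑ j ∈ Icc 1 n, ‖F j‖ ^ 2 := by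
    rw [range_eq_Ico, sum_Ico_add' (fun j ↦ ‖F j‖ ^ 2)]
    exact sum_le_sum_of_subset_of_nonneg (fun j hj ↦ by simp at hj ⊢; omega)
      (fun _ _ _ ↦ sq_nonneg _)
  have hexp : ∑ _k ∈ range i, 2 * a ≤ 2 * (2 * C + 1) * (n * τ) := by
    rw [sum_const, card_range, nsmul_eq_mul, ha]
    nlinarith [(Nat.cast_le (α := ℝ)).2 hi]
  calc ‖e i‖ ^ 2
      ≤ (∑ k ∈ range i, 2 * τ⁻¹ * ‖F (k + 1)‖ ^ 2) * Real.exp (∑ _k ∈ range i, 2 * a) := by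
        simpa [he0] using discrete_gronwall_of_le_horizon (fun k ↦ sq_nonneg ‖e k‖) step
          (fun _ ↦ by positivity) (fun _ ↦ by positivity) hi
    _ ≤ (2 * τ⁻¹ * ∑ j ∈ Icc 1 n, ‖F j‖ ^ 2) * Real.exp (2 * (2 * C + 1) * (n * τ)) := by
        rw [← mul_sum]
        gcongr
    _ = _ := by ring

/-- Discrete stability estimate for the implicit Euler scheme: if `⟨R_i x, x⟩ ≤ C‖x‖²`,
`e_0 = 0` and `e_i = e_{i−1} + τ R_i e_i + F_i` for `i = 1,…,n`, and `(2C+1)τ ≤ 1/2`, then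
`max_{i≤n} ‖e_i‖² ≤ 2 e^{2(2C+1)T} τ⁻¹ Σ_{i=1}^n ‖F_i‖²` with `T = nτ`. -/
theorem discrete_stability
    {X : Type*} [NormedAddCommGroup X] [InnerProductSpace ℝ X] [CompleteSpace X]
    (C τ : ℝ) (hC : 0 ≤ C) (hτ : 0 < τ) (n : ℕ) (hn : 0 < n)
    (R : ℕ → X →L[ℝ] X)
    (hR : ∀ i, 1 ≤ i → i ≤ n → ∀ x : X, ⟪R i x, x⟫ ≤ C * ‖x‖ ^ 2)
    (F : ℕ → X) (e : ℕ → X) (he0 : e 0 = 0)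
    (heq : ∀ i, 1 ≤ i → i ≤ n → e i = e (i - 1) + τ • R i (e i) + F i)
    (hsmall : (2 * C + 1) * τ ≤ 1 / 2) :
    ∀ i ≤ n, ‖e i‖ ^ 2
      ≤ 2 * Real.exp (2 * (2 * C + 1) * (n * τ)) * τ⁻¹ * ∑ i ∈ Finset.Icc 1 n, ‖F i‖ ^ 2 :=
  discrete_stability_general C τ hC hτ n R hR F e he0 heq hsmall
end
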